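/- Let P_{A_m B_m} be joint distributions on a countable product A×B such that V(P_{A_m B_m}, P_{AB}) → 0 and H(P_{A_m B_m}) → H(P_{AB}) < ∞. Then the marginal entropies converge: H(P_{A_m}) → H(P_A). -/

import Mathlib

def IsPMF {α : Type*} (p : α → ℝ) : Prop := (∀ a, 0 ≤ p a) ∧ ∑' a, p a = 1

/-- Shannon entropy in bits, valued in `ℝ≥0∞`. -/
noncomputable def Hen {α : Type*} (p : α → ℝ) : ENNReal :=
  ∑' a, ENNReal.ofReal (-(p a * Real.logb 2 (p a)))

/-!
Write `q` for the first marginal of `p`. The chain rule splits `H(p) = H(q) + H(p | q)` into two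
nonnegative parts, each of which is lower semicontinuous under pointwise convergence (Fatou's
lemma for sums, applied to continuous nonnegative summands). Total-variation convergence gives
pointwise convergence of `pₘ` and of its marginals `qₘ`, so `H(q) ≤ liminf H(qₘ)` and
`H(p | q) ≤ liminf H(pₘ | qₘ)`. As `H(pₘ) → H(p) < ∞`, this gives
`limsup H(qₘ) + H(p | q) ≤ H(p) = H(q) + H(p | q)`, hence `H(qₘ) → H(q)`.
-/

open Filter Real Topology
open scoped ENNReal

section LowerSemicontinuity

variable {ι α : Type*} {l : Filter ι}

lemma ENNReal.tsum_le_liminf_of_tendsto [l.NeBot] {f : ι → α → ℝ≥0∞} {g : α → ℝ≥0∞}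
    (h : ∀ a, Tendsto (f · a) l (𝓝 (g a))) :
    ∑' a, g a ≤ liminf (fun i => ∑' a, f i a) l := by
  rw [ENNReal.tsum_eq_iSup_sum]
  refine iSup_le fun s => ?_
  calc ∑ a ∈ s, g a = liminf (fun i => ∑ a ∈ s, f i a) l :=
        (tendsto_finsetSum s fun a _ => h a).liminf_eq.symm
    _ ≤ liminf (fun i => ∑' a, f i a) l :=
        liminf_le_liminf (Eventually.of_forall fun i => ENNReal.sum_le_tsum s)

lemma ENNReal.limsup_add_liminf_le_limsup_add [l.NeBot] (u v : ι → ℝ≥0∞) :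
    limsup u l + liminf v l ≤ limsup (u + v) l := by
  have hcoe : Continuous ENNReal.toEReal := continuous_coe_ennreal_ereal
  have hmono : Monotone ENNReal.toEReal := fun _ _ => EReal.coe_ennreal_le_coe_ennreal_iff.2
  rw [← EReal.coe_ennreal_le_coe_ennreal_iff, EReal.coe_ennreal_add,
    hmono.map_limsup_of_continuousAt u hcoe.continuousAt,
    hmono.map_liminf_of_continuousAt v hcoe.continuousAt,
    hmono.map_limsup_of_continuousAt (u + v) hcoe.continuousAt]
  convert EReal.le_limsup_add (u := ENNReal.toEReal ∘ u) (v := ENNReal.toEReal ∘ v) using 2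
  ext i
  exact EReal.coe_ennreal_add (u i) (v i)

lemma ENNReal.tendsto_of_tendsto_add_of_le_liminf [l.NeBot] {x y : ι → ℝ≥0∞} {a b : ℝ≥0∞}
    (hb : b ≠ ∞) (h : Tendsto (fun i => x i + y i) l (𝓝 (a + b)))
    (hx : a ≤ liminf x l) (hy : b ≤ liminf y l) : Tendsto x l (𝓝 a) := by
  refine tendsto_of_le_liminf_of_limsup_le hx ((ENNReal.add_le_add_iff_right hb).1 ?_)
  calc limsup x l + b ≤ limsup x l + liminf y l := add_le_add_right hy _
    _ ≤ limsup (x + y) l := ENNReal.limsup_add_liminf_le_limsup_add x y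
    _ = a + b := h.limsup_eq

end LowerSemicontinuity

section TotalVariation

variable {ι α β : Type*} {l : Filter ι}

lemma tendsto_of_abs_sub_le {u ε : ι → ℝ} {c : ℝ} (h : ∀ i, |u i - c| ≤ ε i)
    (hε : Tendsto ε l (𝓝 0)) : Tendsto u l (𝓝 c) :=
  tendsto_iff_norm_sub_tendsto_zero.2 (squeeze_zero (fun _ => norm_nonneg _) h hε)

lemma abs_sub_le_tsum_abs_sub {f g : α → ℝ} (hf : Summable f) (hg : Summable g) (a : α) :
    |f a - g a| ≤ ∑' a, |f a - g a| :=
  (hf.sub hg).abs.le_tsum a fun _ _ => abs_nonneg _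

noncomputable def marginal (p : α × β → ℝ) (a : α) : ℝ := ∑' b, p (a, b)

lemma abs_marginal_sub_le {f g : α × β → ℝ} (hf : Summable f) (hg : Summable g) (a : α) :
    |marginal f a - marginal g a| ≤ ∑' ab, |f ab - g ab| := by
  have hd : Summable fun ab => |f ab - g ab| := (hf.sub hg).abs
  calc |marginal f a - marginal g a| = |∑' b, (f (a, b) - g (a, b))| := by
        rw [marginal, marginal, (hf.prod_factor a).tsum_sub (hg.prod_factor a)]
    _ ≤ ∑' b, |f (a, b) - g (a, b)| := by
        simpa only [Real.norm_eq_abs] using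
          norm_tsum_le_tsum_norm (f := fun b => f (a, b) - g (a, b)) (hd.prod_factor a)
    _ ≤ ∑' ab, |f ab - g ab| :=
        (hd.prod_factor a).tsum_le_tsum_of_inj (Prod.mk a) (Prod.mk_right_injective a)
          (fun _ _ => abs_nonneg _) (fun _ => le_rfl) hd

end TotalVariation

section PMF

variable {α β : Type*}

lemma IsPMF.summable {p : α → ℝ} (hp : IsPMF p) : Summable p := by
  by_contra hs
  exact one_ne_zero (hp.2.symm.trans (tsum_eq_zero_of_not_summable hs))

lemma IsPMF.le_one {p : α → ℝ} (hp : IsPMF p) (a : α) : p a ≤ 1 :=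
  hp.2 ▸ hp.summable.le_tsum a fun b _ => hp.1 b

lemma IsPMF.le_marginal {p : α × β → ℝ} (hp : IsPMF p) (a : α) (b : β) :
    p (a, b) ≤ marginal p a :=
  (hp.summable.prod_factor a).le_tsum b fun _ _ => hp.1 _

lemma isPMF_marginal {p : α × β → ℝ} (hp : IsPMF p) : IsPMF (marginal p) :=
  ⟨fun _ => tsum_nonneg fun _ => hp.1 _, by rw [← hp.2, hp.summable.tsum_prod]; rfl⟩

end PMF

section Entropy

variable {ι α β : Type*} {l : Filter ι}

lemma neg_mul_logb_two (x : ℝ) : -(x * logb 2 x) = negMulLog x / log 2 := by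
  rw [logb, negMulLog]
  ring

lemma Hen_le_liminf_of_tendsto [l.NeBot] {q : ι → α → ℝ} {q₀ : α → ℝ}
    (h : ∀ a, Tendsto (q · a) l (𝓝 (q₀ a))) : Hen q₀ ≤ liminf (fun i => Hen (q i)) l := by
  have hcont : Continuous fun x : ℝ => ENNReal.ofReal (-(x * logb 2 x)) := by
    simp_rw [neg_mul_logb_two]
    exact ENNReal.continuous_ofReal.comp (continuous_negMulLog.div_const _)
  exact ENNReal.tsum_le_liminf_of_tendsto fun a => (hcont.tendsto _).comp (h a)

lemma mul_logb_div_nonneg {x y : ℝ} (hx : 0 ≤ x) (hxy : x ≤ y) : 0 ≤ x * logb 2 (y / x) := by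
  rcases hx.eq_or_lt with rfl | hx
  · simp
  · exact mul_nonneg hx.le (logb_nonneg one_lt_two ((one_le_div hx).2 hxy))

lemma mul_logb_div_le {x y : ℝ} (hx : 0 ≤ x) (hxy : x ≤ y) :
    x * logb 2 (y / x) ≤ y / log 2 := by
  rcases hx.eq_or_lt with rfl | hx
  · simpa using div_nonneg hxy (log_nonneg one_le_two)
  · calc x * logb 2 (y / x) = x * log (y / x) / log 2 := by rw [logb, mul_div_assoc]
      _ ≤ x * (y / x - 1) / log 2 := by
          gcongr
          exact log_le_sub_one_of_pos (div_pos (hx.trans_le hxy) hx)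
      _ = (y - x) / log 2 := by field_simp
      _ ≤ y / log 2 := by gcongr; linarith

lemma mul_logb_div_eq (x : ℝ) {y : ℝ} (hy : y ≠ 0) :
    x * logb 2 (y / x) = (x * log y + negMulLog x) / log 2 := by
  rcases eq_or_ne x 0 with rfl | hx
  · simp
  · rw [logb, log_div hy hx, negMulLog]
    ring

/-- The summand of the conditional entropy is continuous where the marginal is positive, and is
squeezed between `0` and `y / log 2` where it vanishes. -/
lemma tendsto_mul_logb_div {x y : ι → ℝ} {x₀ y₀ : ℝ} (hx : Tendsto x l (𝓝 x₀))
    (hy : Tendsto y l (𝓝 y₀)) (hx0 : ∀ i, 0 ≤ x i) (hxy : ∀ i, x i ≤ y i) :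
    Tendsto (fun i => x i * logb 2 (y i / x i)) l (𝓝 (x₀ * logb 2 (y₀ / x₀))) := by
  rcases eq_or_ne y₀ 0 with rfl | hy₀
  · have hbound : Tendsto (fun i => y i / log 2) l (𝓝 0) := by
      simpa using hy.div_const (log 2)
    simpa using squeeze_zero (fun i => mul_logb_div_nonneg (hx0 i) (hxy i))
      (fun i => mul_logb_div_le (hx0 i) (hxy i)) hbound
  · rw [mul_logb_div_eq x₀ hy₀]
    refine Tendsto.congr' ?_ (((hx.mul ((continuousAt_log hy₀).tendsto.comp hy)).add
      ((continuous_negMulLog.tendsto x₀).comp hx)).div_const (log 2))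
    filter_upwards [hy.eventually_ne hy₀] with i hi
    exact (mul_logb_div_eq (x i) hi).symm

noncomputable def condEntropy (p : α × β → ℝ) : ℝ≥0∞ :=
  ∑' ab, ENNReal.ofReal (p ab * logb 2 (marginal p ab.1 / p ab))

lemma condEntropy_le_liminf_of_tendsto [l.NeBot] {p : ι → α × β → ℝ} {p₀ : α × β → ℝ}
    (hp : ∀ i, IsPMF (p i)) (hpt : ∀ ab, Tendsto (p · ab) l (𝓝 (p₀ ab)))
    (hmt : ∀ a, Tendsto (fun i => marginal (p i) a) l (𝓝 (marginal p₀ a))) :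
    condEntropy p₀ ≤ liminf (fun i => condEntropy (p i)) l :=
  ENNReal.tsum_le_liminf_of_tendsto fun ⟨a, b⟩ => (ENNReal.continuous_ofReal.tendsto _).comp
    (tendsto_mul_logb_div (hpt (a, b)) (hmt a) (fun i => (hp i).1 _)
      (fun i => (hp i).le_marginal a b))

lemma ofReal_neg_mul_logb_eq_add {x y : ℝ} (hx : 0 ≤ x) (hxy : x ≤ y) (hy : y ≤ 1) :
    ENNReal.ofReal (-(x * logb 2 x)) =
      ENNReal.ofReal (x * logb 2 (y / x)) + ENNReal.ofReal (-(x * logb 2 y)) := by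
  have hlog : 0 ≤ -(x * logb 2 y) :=
    neg_nonneg.2 (mul_nonpos_of_nonneg_of_nonpos hx (logb_nonpos one_lt_two (hx.trans hxy) hy))
  rw [← ENNReal.ofReal_add (mul_logb_div_nonneg hx hxy) hlog]
  congr 1
  rcases hx.eq_or_lt with rfl | hx
  · simp
  · rw [logb_div (hx.trans_le hxy).ne' hx.ne']
    ring

lemma Hen_eq_Hen_marginal_add_condEntropy {p : α × β → ℝ} (hp : IsPMF p) :
    Hen p = Hen (marginal p) + condEntropy p := by
  have hq := isPMF_marginal hp
  have hsplit : Hen p = condEntropy p +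
      ∑' ab : α × β, ENNReal.ofReal (p ab * -logb 2 (marginal p ab.1)) := by
    rw [Hen, condEntropy, ← ENNReal.tsum_add]
    refine tsum_congr fun ⟨a, b⟩ => ?_
    rw [mul_neg]
    exact ofReal_neg_mul_logb_eq_add (hp.1 _) (hp.le_marginal a b) (hq.le_one a)
  have hfibre : ∑' ab : α × β, ENNReal.ofReal (p ab * -logb 2 (marginal p ab.1)) =
      Hen (marginal p) := by
    rw [ENNReal.tsum_prod', Hen]
    refine tsum_congr fun a => ?_
    simp_rw [ENNReal.ofReal_mul (hp.1 _)]
    rw [ENNReal.tsum_mul_right, ← ENNReal.ofReal_tsum_of_nonneg (fun b => hp.1 _)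
      (hp.summable.prod_factor a), ← marginal, ← ENNReal.ofReal_mul (hq.1 a), mul_neg]
  rw [hsplit, hfibre, add_comm]

end Entropy

theorem marginal_entropy_convergence_general
    {A B : Type*}
    (pm : ℕ → A × B → ℝ) (p : A × B → ℝ)
    (hpm : ∀ m, IsPMF (pm m)) (hp : IsPMF p)
    (hfin : Hen p ≠ ⊤)
    (hV : Filter.Tendsto (fun m => ∑' ab : A × B, |pm m ab - p ab|)
      Filter.atTop (nhds 0))
    (hH : Filter.Tendsto (fun m => Hen (pm m)) Filter.atTop (nhds (Hen p))) :
    Filter.Tendsto (fun m => Hen fun a => ∑' b, pm m (a, b))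
      Filter.atTop (nhds (Hen fun a => ∑' b, p (a, b))) := by
  have hpt : ∀ ab, Tendsto (pm · ab) atTop (𝓝 (p ab)) := fun ab =>
    tendsto_of_abs_sub_le (fun m => abs_sub_le_tsum_abs_sub (hpm m).summable hp.summable ab) hV
  have hmt : ∀ a, Tendsto (fun m => marginal (pm m) a) atTop (𝓝 (marginal p a)) := fun a =>
    tendsto_of_abs_sub_le (fun m => abs_marginal_sub_le (hpm m).summable hp.summable a) hV
  have hchain := Hen_eq_Hen_marginal_add_condEntropy hp
  have hsum : Tendsto (fun m => Hen (marginal (pm m)) + condEntropy (pm m)) atTop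
      (𝓝 (Hen (marginal p) + condEntropy p)) := by
    simpa only [← Hen_eq_Hen_marginal_add_condEntropy (hpm _), ← hchain] using hH
  exact ENNReal.tendsto_of_tendsto_add_of_le_liminf
    (ne_top_of_le_ne_top hfin (hchain ▸ le_add_self)) hsum
    (Hen_le_liminf_of_tendsto hmt) (condEntropy_le_liminf_of_tendsto hpm hpt hmt)

theorem marginal_entropy_convergence
    {A B : Type*} [Countable A] [Countable B]
    (pm : ℕ → A × B → ℝ) (p : A × B → ℝ)
    (hpm : ∀ m, IsPMF (pm m)) (hp : IsPMF p)
    (hfin : Hen p ≠ ⊤)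
    (hV : Filter.Tendsto (fun m => ∑' ab : A × B, |pm m ab - p ab|)
      Filter.atTop (nhds 0))
    (hH : Filter.Tendsto (fun m => Hen (pm m)) Filter.atTop (nhds (Hen p))) :
    Filter.Tendsto (fun m => Hen fun a => ∑' b, pm m (a, b))
      Filter.atTop (nhds (Hen fun a => ∑' b, p (a, b))) :=
  marginal_entropy_convergence_general pm p hpm hp hfin hV hH
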